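/- arXiv:1301.0078 — 4 statements merged into one kernel-verified Lean document; each statement's English description precedes it below -/
import Mathlib

section
/- If D : W → G is a generalized Dedekind symbol with reciprocity function f, then f satisfies the three-term relation f(p,p+q)·f(p+q,q)=f(p,q). -/
/-- If `D` is a generalized Dedekind symbol with reciprocity function `f`, then `f`
satisfies the three-term relation `f(p,p+q)·f(p+q,q) = f(p,q)`. -/
theorem dedekind_recip_triple {G : Type*} [Group G] (D f : ℤ → ℤ → G)
    (h4 : ∀ p q : ℤ, IsCoprime p q → D p q = D p (q + p))
    (h5 : ∀ p q : ℤ, IsCoprime p q → D p (-q) = D (-p) q)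
    (h6 : ∀ p q : ℤ, IsCoprime p q → D p q * (D q (-p))⁻¹ = f p q) :
    ∀ p q : ℤ, IsCoprime p q → f p (p + q) * f (p + q) q = f p q := by
  intro p q h
  have hppq : IsCoprime p (p + q) := by
    have := h.add_mul_left_right 1; simpa [add_comm] using this
  have hqpq' : IsCoprime q (p + q) := by
    have := h.symm.add_mul_left_right 1; simpa using this
  have hpqp : IsCoprime (p + q) (-p) := hppq.symm.neg_right
  have hpqq : IsCoprime (p + q) q := hqpq'.symm
  have hqpq : IsCoprime q (-(p + q)) := hqpq'.neg_right
  have e1 : D p (p + q) = D p q := by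
    have := h4 p q h; rw [this, add_comm]
  have e2 : D (p + q) (-p) = D (p + q) q := by
    have := h4 (p + q) (-p) hpqp
    rw [this]; ring_nf
  have e3 : D q (-(p + q)) = D q (-p) := by
    have := h4 q (-(p + q)) hqpq
    rw [this]; ring_nf
  rw [← h6 p (p + q) hppq, ← h6 (p + q) q hpqq,
      ← h6 p q h, e1, e2, e3]
  group
end

section
/- If the integer sequence b = (a₀,…,aᵢ+ε, ε, aᵢ₊₁+ε, aᵢ₊₂,…,aₙ) is obtained from a = (a₀,…,aₙ) by the move of type (i) with ε ∈ {1,−1}, then the modified continued fractions of a and b represent the same rational number: ⟨a₀,…,aₙ⟩ = ⟨b₀,…,bₙ₊₁⟩. -/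
/-- The pair `(Q⁽ⁿ⁾, P⁽ⁿ⁾)` of Manin's recursion, evaluated on a list `[a₀,…,aₙ]` of
integers: `QP [] = (1,0)` and `QP (a₀ :: l) = (a₀ * Q(l) - P(l), Q(l))`, so `QP [a] = (a,1)`.
The modified continued fraction `⟨a₀,…,aₙ⟩`, as an element of `ℚ ∪ {∞} = P¹(ℚ)`, is the
point with homogeneous coordinates `(Q(l), P(l))`; since these coordinates are coprime
(hence not both zero), two lists represent the same point of `ℚ ∪ {∞}` if and only if the
cross-multiplication identity `Q(l₁)·P(l₂) = Q(l₂)·P(l₁)` holds. -/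
def QP : List ℤ → ℤ × ℤ
  | [] => (1, 0)
  | a :: l => (a * (QP l).1 - (QP l).2, (QP l).1)

/-! The move multiplies the pair `QP` of the tail `aᵢ, aᵢ₊₁, …` by `ε` (using `ε² = 1`).
Prepending the entries `a₀, …, aᵢ₋₁` acts on `QP` by a linear map, so the pair of the whole
sequence is multiplied by `ε` as well, and proportional pairs are the same point of `P¹(ℚ)`. -/

lemma QP_cons_of_eq_smul {l l' : List ℤ} {c : ℤ} (h : QP l' = c • QP l) (a : ℤ) :
    QP (a :: l') = c • QP (a :: l) := by
  simp only [QP, h, Prod.smul_fst, Prod.smul_snd, Prod.smul_mk, smul_eq_mul, Prod.mk.injEq]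
  exact ⟨by ring, trivial⟩

lemma QP_append_of_eq_smul {l l' : List ℤ} {c : ℤ} (h : QP l' = c • QP l) (x : List ℤ) :
    QP (x ++ l') = c • QP (x ++ l) := by
  induction x with
  | nil => exact h
  | cons a t ih => exact QP_cons_of_eq_smul ih a

lemma QP_move_one (u v ε : ℤ) (hε : ε * ε = 1) (y : List ℤ) :
    QP ((u + ε) :: ε :: (v + ε) :: y) = ε • QP (u :: v :: y) := by
  simp only [QP, Prod.smul_mk, smul_eq_mul, Prod.mk.injEq]
  constructor
  · linear_combination ((u + v + ε) * (QP y).1 - (QP y).2) * hε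
  · linear_combination (QP y).1 * hε

lemma cross_mul_eq_of_eq_smul {p q : ℤ × ℤ} {c : ℤ} (h : q = c • p) :
    p.1 * q.2 = q.1 * p.2 := by
  subst h
  simp only [Prod.smul_fst, Prod.smul_snd, smul_eq_mul]
  ring

/-- Move of type (i): replacing the consecutive entries `(aᵢ, aᵢ₊₁)` of a sequence by
`(aᵢ+ε, ε, aᵢ₊₁+ε)` with `ε = ±1` does not change the rational number (element of
`ℚ ∪ {∞}`) represented by the modified continued fraction. -/
theorem move_one (x y : List ℤ) (u v ε : ℤ) (hε : ε = 1 ∨ ε = -1) :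
    (QP (x ++ [u, v] ++ y)).1 * (QP (x ++ [u + ε, ε, v + ε] ++ y)).2 =
      (QP (x ++ [u + ε, ε, v + ε] ++ y)).1 * (QP (x ++ [u, v] ++ y)).2 := by
  have hεε : ε * ε = 1 := by rcases hε with rfl | rfl <;> norm_num
  apply cross_mul_eq_of_eq_smul (c := ε)
  simpa only [List.append_assoc, List.cons_append, List.nil_append] using
    QP_append_of_eq_smul (QP_move_one u v ε hεε y) x
end

section
/- If b' = (a₀,…,aᵢ₋₁, b, 0, c, aᵢ₊₁,…,aₙ) with aᵢ = b + c (move of type (ii)), then ⟨a₀,…,aₙ⟩ = ⟨b'₀,…,b'ₙ₊₂⟩ as rational numbers. -/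
lemma QP_neg_ext (x l1 l2 : List ℤ) (h : QP l1 = (-(QP l2).1, -(QP l2).2)) :
    QP (x ++ l1) = (-(QP (x ++ l2)).1, -(QP (x ++ l2)).2) := by
  induction x with
  | nil => simpa using h
  | cons a t ih => simp [QP, ih]; ring

/-- Move of type (ii): replacing an entry `aᵢ = b + c` of a sequence by the three entries
`(b, 0, c)` does not change the rational number (element of `ℚ ∪ {∞}`) represented by the
modified continued fraction. -/
theorem move_two (x y : List ℤ) (a b c : ℤ) (habc : a = b + c) :
    (QP (x ++ [a] ++ y)).1 * (QP (x ++ [b, 0, c] ++ y)).2 =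
      (QP (x ++ [b, 0, c] ++ y)).1 * (QP (x ++ [a] ++ y)).2 := by
  have h : QP ([b, 0, c] ++ y) = (-(QP ([a] ++ y)).1, -(QP ([a] ++ y)).2) := by
    simp [QP, habc]; ring
  have := QP_neg_ext x _ _ h
  simp only [List.append_assoc] at *
  rw [this]
  ring
end

section
/- Let f : W → G be a reciprocity function. Given (p,q) ∈ W with q/p = ⟨a₀,…,aₙ⟩, and setting qᵢ = Q⁽ⁿ⁻ⁱ⁾(aᵢ,…,aₙ), pᵢ = P⁽ⁿ⁻ⁱ⁾(aᵢ,…,aₙ), define D(p,q) := f(p₁,q₁)^{-1}·f(p₂,q₂)^{-1}⋯f(pₙ,qₙ)^{-1}. Then D(p,q) does not depend on the choice of the continued fraction representation (a₀,…,aₙ) of q/p. -/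
/-- Fukuhara's product: for `q/p = ⟨a₀,…,aₙ⟩` with `qᵢ = Q⁽ⁿ⁻ⁱ⁾(aᵢ,…,aₙ)`,
`pᵢ = P⁽ⁿ⁻ⁱ⁾(aᵢ,…,aₙ)`, this computes
`f(p₁,q₁)⁻¹ · f(p₂,q₂)⁻¹ ⋯ f(pₙ,qₙ)⁻¹` from the list `[a₀,…,aₙ]`. -/
def Dval {G : Type*} [Group G] (f : ℤ → ℤ → G) : List ℤ → G
  | [] => 1
  | [_] => 1
  | _ :: b :: l => (f (QP (b :: l)).2 (QP (b :: l)).1)⁻¹ * Dval f (b :: l)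

section FukuharaAux

lemma natAbs_emod_lt' (a b : ℤ) (hb : b ≠ 0) : (a % b).natAbs < b.natAbs := by
  have h0 : 0 ≤ a % b := Int.emod_nonneg a hb
  have h1 : a % b < |b| := by
    rcases lt_or_gt_of_ne hb with h | h
    · have e : a % b = a % (-b) := by simpa using Int.emod_neg a (-b)
      have := Int.emod_lt_of_pos a (show (0:ℤ) < -b by omega)
      rw [abs_of_neg h]; omega
    · rw [abs_of_pos h]; exact Int.emod_lt_of_pos a h
  rw [Int.abs_eq_natAbs] at h1
  omega

lemma emod_eq_self' (m x : ℤ) (h0 : 0 ≤ x) (h1 : x < |m|) : x % m = x := by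
  rcases le_or_gt m 0 with h | h
  · have e : x % m = x % (-m) := by simpa using Int.emod_neg x (-m)
    rw [e]
    exact Int.emod_eq_of_lt h0 (by rw [abs_of_nonpos h] at h1; omega)
  · exact Int.emod_eq_of_lt h0 (by rwa [abs_of_pos h] at h1)

variable {G : Type*} [Group G]

/-- The intrinsic value of Fukuhara's product, defined by the Euclidean algorithm. -/
def phi (f : ℤ → ℤ → G) (Q P : ℤ) : G :=
  if h : P = 0 then f 0 1
  else (f (-Q % P) P)⁻¹ * phi f P (-Q % P)
termination_by P.natAbs
decreasing_by exact natAbs_emod_lt' (-Q) P h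

variable (f : ℤ → ℤ → G)

lemma phi_zero (Q : ℤ) : phi f Q 0 = f 0 1 := by rw [phi]; simp

lemma phi_ne (Q : ℤ) {P : ℤ} (h : P ≠ 0) :
    phi f Q P = (f (-Q % P) P)⁻¹ * phi f P (-Q % P) := by
  rw [phi]; simp [h]

lemma phi_add_mul (Q P k : ℤ) : phi f (Q + k * P) P = phi f Q P := by
  by_cases h : P = 0
  · subst h; rw [phi_zero, phi_zero]
  · rw [phi_ne f _ h, phi_ne f Q h]
    have e : -(Q + k * P) % P = -Q % P := by
      rw [show -(Q + k * P) = -Q + P * (-k) by ring, Int.add_mul_emod_self_left]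
    rw [e]

variable (h1 : ∀ p q : ℤ, IsCoprime p q → f p (-q) = f (-p) q)
variable (h2 : ∀ p q : ℤ, IsCoprime p q → f p q * f (-q) p = 1)
variable (h3 : ∀ p q : ℤ, IsCoprime p q → f p (p + q) * f (p + q) q = f p q)

lemma cop01 : IsCoprime (0:ℤ) 1 := isCoprime_zero_left.mpr isUnit_one

include h2 in
lemma e2 : f 1 0 * f 0 1 = 1 := by
  have := h2 1 0 isCoprime_one_left
  rwa [neg_zero] at this

include h1 in
lemma e5 : f (-1) 0 = f 1 0 := by
  have := h1 1 0 isCoprime_one_left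
  rw [neg_zero] at this; exact this.symm

include h1 in
lemma e4 : f 0 (-1) = f 0 1 := by
  have := h1 0 1 cop01
  rwa [neg_zero] at this

include h1 h2 h3 in
lemma e6 : f 1 (-1) = 1 := by
  have := h3 1 (-1) (isCoprime_one_left)
  rw [show (1:ℤ) + -1 = 0 by ring] at this
  rw [← this, e4 f h1, e2 f h2]

include h1 h2 h3 in
lemma e7 : f (-1) 1 = 1 := by
  have := h1 1 1 isCoprime_one_left
  rw [← this, e6 f h1 h2 h3]

lemma phi_P1 (Q : ℤ) : phi f Q 1 = 1 := by
  rw [phi_ne f Q one_ne_zero, Int.emod_one, phi_zero, inv_mul_cancel]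

include h1 in
lemma phi_Pneg1 (Q : ℤ) : phi f Q (-1) = 1 := by
  have hne : (-1 : ℤ) ≠ 0 := by norm_num
  have e : -Q % (-1 : ℤ) = 0 := by
    have e' : -Q % (-1 : ℤ) = -Q % (1:ℤ) := by simpa using Int.emod_neg (-Q) 1
    rw [e', Int.emod_one]
  rw [phi_ne f Q hne, e, phi_zero, e4 f h1, inv_mul_cancel]

-- The fundamental one-step reduction: an instance of invariance for modulus `y+m`
-- implies the single-step invariance `Ψ(m, y+m) = Ψ(m, y)`.
include h3 in
lemma step (m y : ℤ) (hco : IsCoprime m y) (hym : y + m ≠ 0)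
    (hN : (f (y % (y + m)) (y + m))⁻¹ * phi f (y + m) (y % (y + m))
        = (f y (y + m))⁻¹ * phi f (y + m) y) :
    (f (y + m) m)⁻¹ * phi f m (y + m) = (f y m)⁻¹ * phi f m y := by
  have hmod : -m % (y + m) = y % (y + m) := by
    rw [show -m = y + (y + m) * (-1) by ring, Int.add_mul_emod_self_left]
  have hphi : phi f m y = phi f (y + m) y := by
    rw [show y + m = m + 1 * y by ring, phi_add_mul]
  have h3' : f y (y + m) * f (y + m) m = f y m := h3 y m hco.symm
  rw [phi_ne f m hym, hmod, hN, hphi, ← h3', mul_inv_rev, mul_assoc]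

-- coprimality helpers
lemma copShift {m x : ℤ} (k : ℤ) (h : IsCoprime m x) : IsCoprime m (x + k * m) := by
  rw [show x + k * m = x + m * k by ring]; exact h.add_mul_left_right k

lemma copCross {m x : ℤ} (h : IsCoprime m x) : IsCoprime (x + m) x := by
  have := h.add_mul_right_left 1
  rwa [show m + 1 * x = x + m by ring] at this

lemma copCross' {m x : ℤ} (h : IsCoprime m x) : IsCoprime x (x - m) := by
  have := (h.symm.neg_right).add_mul_left_right 1
  rwa [show -m + x * 1 = x - m by ring] at this

-- Layer A : m > 0, x ≥ 0.
include h3 in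
lemma NA : ∀ (n : ℕ) (m x : ℤ), 0 < m → 0 ≤ x → x.natAbs ≤ n → IsCoprime m x →
    (f (x % m) m)⁻¹ * phi f m (x % m) = (f x m)⁻¹ * phi f m x := by
  intro n
  induction n with
  | zero =>
    intro m x hm hx hn hco
    have : x = 0 := by omega
    subst this; rw [Int.zero_emod]
  | succ n ih =>
    intro m x hm hx hn hco
    by_cases hlt : x < m
    · rw [Int.emod_eq_of_lt hx hlt]
    · push_neg at hlt
      have hX : x - m + m = x := by ring
      have hco' : IsCoprime m (x - m) := by
        have := copShift (-1) hco; rwa [show x + -1 * m = x - m by ring] at this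
      have hN : (f ((x - m) % (x - m + m)) (x - m + m))⁻¹
            * phi f (x - m + m) ((x - m) % (x - m + m))
          = (f (x - m) (x - m + m))⁻¹ * phi f (x - m + m) (x - m) := by
        rw [hX, Int.emod_eq_of_lt (by omega) (by omega)]
      have hstep := step f h3 m (x - m) hco' (by omega) hN
      rw [hX] at hstep
      have hrec := ih m (x - m) hm (by omega) (by omega) hco'
      have he : (x - m) % m = x % m := by
        rw [show x - m = x + m * (-1) by ring, Int.add_mul_emod_self_left]
      rw [he] at hrec
      exact hrec.trans hstep.symm

-- Layer C : m < 0, x ≥ 0.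
include h1 h2 h3 in
lemma NC : ∀ (n : ℕ) (m x : ℤ), m < 0 → 0 ≤ x → x.natAbs ≤ n → IsCoprime m x →
    (f (x % m) m)⁻¹ * phi f m (x % m) = (f x m)⁻¹ * phi f m x := by
  intro n
  induction n with
  | zero =>
    intro m x hm hx hn hco
    have : x = 0 := by omega
    subst this; rw [Int.zero_emod]
  | succ n ih =>
    intro m x hm hx hn hco
    by_cases hlt : x < -m
    · rw [emod_eq_self' m x hx (by rw [abs_of_neg hm]; omega)]
    · push_neg at hlt
      by_cases h0 : x + m = 0
      · -- leaf : m = -1, x = 1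
        have hdvd : m ∣ x := ⟨-1, by omega⟩
        have hu : IsUnit m := hco.isUnit_of_dvd' (dvd_refl m) hdvd
        have hm1 : m = -1 := by rcases Int.isUnit_iff.mp hu with h | h <;> omega
        have hx1 : x = 1 := by omega
        subst hm1; subst hx1
        have e : (1:ℤ) % (-1 : ℤ) = 0 := by decide
        rw [e, phi_zero, phi_P1, e4 f h1, e6 f h1 h2 h3, inv_mul_cancel, inv_one, mul_one]
      · have hcoX : IsCoprime (x + m) x := copCross hco
        have hN := NA f h3 x.natAbs (x + m) x (by omega) hx le_rfl hcoX
        have hstep := step f h3 m x hco h0 hN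
        have hco' : IsCoprime m (x + m) := by
          have := copShift 1 hco; rwa [show x + 1 * m = x + m by ring] at this
        have hrec := ih m (x + m) hm (by omega) (by omega) hco'
        have he : (x + m) % m = x % m := by
          rw [show x + m = x + m * 1 by ring, Int.add_mul_emod_self_left]
        rw [he] at hrec
        exact hrec.trans hstep

-- Shallow negative case : m < 0, x < 0, 0 ≤ x - m.
include h1 h2 h3 in
lemma Nsh (m x : ℤ) (hm : m < 0) (hx : x < 0) (hxm : 0 ≤ x - m) (hco : IsCoprime m x) :
    (f (x % m) m)⁻¹ * phi f m (x % m) = (f x m)⁻¹ * phi f m x := by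
  have hX : x - m + m = x := by ring
  have hco2 : IsCoprime x (x - m) := copCross' hco
  have hNC := NC f h1 h2 h3 (x - m).natAbs x (x - m) hx hxm le_rfl hco2
  have hN : (f ((x - m) % (x - m + m)) (x - m + m))⁻¹
        * phi f (x - m + m) ((x - m) % (x - m + m))
      = (f (x - m) (x - m + m))⁻¹ * phi f (x - m + m) (x - m) := by
    rw [hX]; exact hNC
  have hco' : IsCoprime m (x - m) := by
    have := copShift (-1) hco; rwa [show x + -1 * m = x - m by ring] at this
  have hstep := step f h3 m (x - m) hco' (by omega) hN
  rw [hX] at hstep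
  have hmod : x % m = x - m := by
    have e1 : x % m = (x - m) % m := by
      rw [show x - m = x + m * (-1) by ring, Int.add_mul_emod_self_left]
    rw [e1]; exact emod_eq_self' m (x - m) hxm (by rw [abs_of_neg hm]; omega)
  rw [hmod]
  exact hstep.symm

-- Layer D : m < 0, x < 0.
include h1 h2 h3 in
lemma ND : ∀ (n : ℕ) (m x : ℤ), m < 0 → x < 0 → x.natAbs ≤ n → IsCoprime m x →
    (f (x % m) m)⁻¹ * phi f m (x % m) = (f x m)⁻¹ * phi f m x := by
  intro n
  induction n with
  | zero => intro m x hm hx hn hco; exfalso; omega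
  | succ n ih =>
    intro m x hm hx hn hco
    by_cases hsh : 0 ≤ x - m
    · exact Nsh f h1 h2 h3 m x hm hx hsh hco
    · push_neg at hsh
      have hX : x - m + m = x := by ring
      have hco2 : IsCoprime x (x - m) := copCross' hco
      have hNsh := Nsh f h1 h2 h3 x (x - m) hx hsh (by omega) hco2
      have hN : (f ((x - m) % (x - m + m)) (x - m + m))⁻¹
            * phi f (x - m + m) ((x - m) % (x - m + m))
          = (f (x - m) (x - m + m))⁻¹ * phi f (x - m + m) (x - m) := by
        rw [hX]; exact hNsh
      have hco' : IsCoprime m (x - m) := by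
        have := copShift (-1) hco; rwa [show x + -1 * m = x - m by ring] at this
      have hstep := step f h3 m (x - m) hco' (by omega) hN
      rw [hX] at hstep
      have hrec := ih m (x - m) hm hsh (by omega) hco'
      have he : (x - m) % m = x % m := by
        rw [show x - m = x + m * (-1) by ring, Int.add_mul_emod_self_left]
      rw [he] at hrec
      exact hrec.trans hstep.symm

-- Layer B : m > 0, x < 0.
include h1 h2 h3 in
lemma NB : ∀ (k n : ℕ) (m x : ℤ), 0 < m → x < 0 → m.natAbs ≤ k → x.natAbs ≤ n →
    IsCoprime m x →
    (f (x % m) m)⁻¹ * phi f m (x % m) = (f x m)⁻¹ * phi f m x := by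
  intro k
  induction k with
  | zero => intro n m x hm hx hk; exfalso; omega
  | succ k ihk =>
    intro n
    induction n with
    | zero => intro m x hm hx hk hn; exfalso; omega
    | succ n ihn =>
      intro m x hm hx hk hn hco
      by_cases h0 : x + m = 0
      · -- leaf : m = 1, x = -1
        have hdvd : m ∣ x := ⟨-1, by omega⟩
        have hu : IsUnit m := hco.isUnit_of_dvd' (dvd_refl m) hdvd
        have hm1 : m = 1 := by rcases Int.isUnit_iff.mp hu with h | h <;> omega
        have hx1 : x = -1 := by omega
        subst hm1; subst hx1
        have e : (-1:ℤ) % (1:ℤ) = 0 := by decide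
        rw [e, phi_zero, phi_Pneg1 f h1, e7 f h1 h2 h3, inv_mul_cancel, inv_one, mul_one]
      · have hcoX : IsCoprime (x + m) x := copCross hco
        have hN : (f (x % (x + m)) (x + m))⁻¹ * phi f (x + m) (x % (x + m))
            = (f x (x + m))⁻¹ * phi f (x + m) x := by
          rcases lt_trichotomy (x + m) 0 with hc | hc | hc
          · exact ND f h1 h2 h3 x.natAbs (x + m) x hc hx le_rfl hcoX
          · exact absurd hc h0
          · exact ihk x.natAbs (x + m) x hc hx (by omega) le_rfl hcoX
        have hstep := step f h3 m x hco h0 hN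
        have hco' : IsCoprime m (x + m) := by
          have := copShift 1 hco; rwa [show x + 1 * m = x + m by ring] at this
        by_cases hend : 0 ≤ x + m
        · have hmod : x % m = x + m := by
            have e1 : x % m = (x + m) % m := by
              rw [show x + m = x + m * 1 by ring, Int.add_mul_emod_self_left]
            rw [e1]; exact Int.emod_eq_of_lt hend (by omega)
          rw [hmod]; exact hstep
        · push_neg at hend
          have hrec := ihn m (x + m) hm hend hk (by omega) hco'
          have he : (x + m) % m = x % m := by
            rw [show x + m = x + m * 1 by ring, Int.add_mul_emod_self_left]
          rw [he] at hrec
          exact hrec.trans hstep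

-- Full invariance of Ψ(m, ·) under reduction mod m.
include h1 h2 h3 in
lemma Nfull (m x : ℤ) (hm : m ≠ 0) (hco : IsCoprime m x) :
    (f (x % m) m)⁻¹ * phi f m (x % m) = (f x m)⁻¹ * phi f m x := by
  rcases lt_or_gt_of_ne hm with hneg | hpos
  · rcases le_or_gt 0 x with hx | hx
    · exact NC f h1 h2 h3 x.natAbs m x hneg hx le_rfl hco
    · exact ND f h1 h2 h3 x.natAbs m x hneg hx le_rfl hco
  · rcases le_or_gt 0 x with hx | hx
    · exact NA f h3 x.natAbs m x hpos hx le_rfl hco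
    · exact NB f h1 h2 h3 m.natAbs x.natAbs m x hpos hx le_rfl le_rfl hco

-- The key reduction step for phi.
include h1 h2 h3 in
lemma star (q p a : ℤ) (hco : IsCoprime q p) :
    phi f (a * q - p) q = (f p q)⁻¹ * phi f q p := by
  by_cases hq : q = 0
  · subst hq
    have hu : IsUnit p := isCoprime_zero_left.mp hco
    rcases Int.isUnit_iff.mp hu with hp | hp <;> subst hp
    · rw [show a * 0 - 1 = -(1:ℤ) by ring, phi_zero, phi_P1, mul_one,
        inv_eq_of_mul_eq_one_right (e2 f h2)]
    · rw [show a * 0 - -1 = (1:ℤ) by ring, phi_zero, phi_Pneg1 f h1, mul_one, e5 f h1,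
        inv_eq_of_mul_eq_one_right (e2 f h2)]
  · have hmod : -(a * q - p) % q = p % q := by
      rw [show -(a * q - p) = p + q * (-a) by ring, Int.add_mul_emod_self_left]
    rw [phi_ne f _ hq, hmod]
    exact Nfull f h1 h2 h3 q p hq hco

lemma QP_coprime : ∀ l : List ℤ, IsCoprime (QP l).1 (QP l).2 := by
  intro l
  induction l with
  | nil => exact isCoprime_one_left
  | cons a t ih =>
    show IsCoprime (a * (QP t).1 - (QP t).2) (QP t).1
    have := (ih.symm.neg_left).add_mul_right_left a
    rwa [show -(QP t).2 + a * (QP t).1 = a * (QP t).1 - (QP t).2 by ring] at this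

include h1 h2 h3 in
lemma bridge : ∀ l : List ℤ, l ≠ [] → Dval f l = phi f (QP l).1 (QP l).2 := by
  intro l
  induction l with
  | nil => intro h; exact absurd rfl h
  | cons a t ih =>
    intro _
    cases t with
    | nil =>
      show (1 : G) = phi f (QP [a]).1 (QP [a]).2
      show (1 : G) = phi f (a * 1 - 0) 1
      rw [phi_P1]
    | cons b t' =>
      have hd : Dval f (a :: b :: t')
          = (f (QP (b :: t')).2 (QP (b :: t')).1)⁻¹ * Dval f (b :: t') := rfl
      rw [hd, ih (by simp)]
      have hst := star f h1 h2 h3 (QP (b :: t')).1 (QP (b :: t')).2 a (QP_coprime (b :: t'))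
      rw [← hst]
      rfl

end FukuharaAux

/-- If `f` is a `G`-valued reciprocity function, then the value
`D(p,q) = f(p₁,q₁)⁻¹ ⋯ f(pₙ,qₙ)⁻¹` depends only on `(p,q)`, not on the chosen
continued-fraction representation `q/p = ⟨a₀,…,aₙ⟩`, i.e. `q = Q(l)`, `p = P(l)`. -/
theorem Dval_well_defined {G : Type*} [Group G] (f : ℤ → ℤ → G)
    (h1 : ∀ p q : ℤ, IsCoprime p q → f p (-q) = f (-p) q)
    (h2 : ∀ p q : ℤ, IsCoprime p q → f p q * f (-q) p = 1)
    (h3 : ∀ p q : ℤ, IsCoprime p q → f p (p + q) * f (p + q) q = f p q)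
    (l₁ l₂ : List ℤ) (h₁ : l₁ ≠ []) (h₂ : l₂ ≠ [])
    (hQ : (QP l₁).1 = (QP l₂).1) (hP : (QP l₁).2 = (QP l₂).2) :
    Dval f l₁ = Dval f l₂ := by
  rw [bridge f h1 h2 h3 l₁ h₁, bridge f h1 h2 h3 l₂ h₂, hQ, hP]
end
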